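/- arXiv:2007.08454 — 2 statements merged into one kernel-verified Lean document; each statement's English description precedes it below -/
import Mathlib

section
/- Let R ∈ SO(3) and S(θ) the rotation about the y-axis by angle θ. The function θ ↦ ‖R·S(θ) − I₃‖_F restricted to [0, 2π) is minimized at θ̂ = arctan2(R₁₃ − R₃₁, R₁₁ + R₃₃), provided (R₁₃ − R₃₁, R₁₁ + R₃₃) ≠ (0,0). -/
/-!
For orthogonal `A` one has `‖A - 1‖_F² = tr((A - 1)ᵀ(A - 1)) = 2n - 2 tr A`, and `R S(θ)` is
orthogonal, so minimizing `‖R S(θ) - 1‖_F` means maximizing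
`tr(R S(θ)) = a cos θ + b sin θ + R₂₂` with `a = R₁₁ + R₃₃`, `b = R₁₃ - R₃₁`.
By Cauchy–Schwarz `a cos θ + b sin θ ≤ √(a² + b²)`, with equality at `θ = arg (a + b i)`.
-/

open Matrix

open Real

/-- Rotation about the y-axis by angle θ. -/
noncomputable def yrot (θ : ℝ) : Matrix (Fin 3) (Fin 3) ℝ :=
  !![cos θ, 0, -sin θ; 0, 1, 0; sin θ, 0, cos θ]

/-- Frobenius norm of a 3×3 real matrix. -/
noncomputable def frobNorm (A : Matrix (Fin 3) (Fin 3) ℝ) : ℝ :=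
  Real.sqrt (∑ i, ∑ j, (A i j) ^ 2)

/-- Two-argument arctangent with values in `(-π, π]`. -/
noncomputable def arctan2 (b a : ℝ) : ℝ := Complex.arg ⟨a, b⟩

theorem Matrix.sum_sq_eq_trace_transpose_mul_self {n α : Type*} [Fintype n] [CommRing α]
    (A : Matrix n n α) : ∑ i, ∑ j, A i j ^ 2 = trace (Aᵀ * A) := by
  simp only [trace, diag, mul_apply, transpose_apply, sq]
  exact Finset.sum_comm

theorem Matrix.sum_sq_sub_one_of_transpose_mul_self {n α : Type*} [Fintype n] [DecidableEq n]
    [CommRing α] {A : Matrix n n α} (hA : Aᵀ * A = 1) :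
    ∑ i, ∑ j, (A - 1) i j ^ 2 = 2 * Fintype.card n - 2 * trace A := by
  have hexp : (A - 1)ᵀ * (A - 1) = 1 + 1 - Aᵀ - A := by
    simp only [transpose_sub, transpose_one, sub_mul, mul_sub, hA, mul_one, one_mul]
    abel
  rw [sum_sq_eq_trace_transpose_mul_self, hexp, trace_sub, trace_sub, trace_add, trace_one,
    trace_transpose]
  ring

theorem transpose_yrot_mul_yrot (θ : ℝ) : (yrot θ)ᵀ * yrot θ = 1 := by
  ext i j
  fin_cases i <;> fin_cases j <;>
    simp [yrot, mul_apply, Fin.sum_univ_three, one_apply] <;> nlinarith [sin_sq_add_cos_sq θ]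

theorem trace_mul_yrot (R : Matrix (Fin 3) (Fin 3) ℝ) (θ : ℝ) :
    trace (R * yrot θ) = (R 0 0 + R 2 2) * cos θ + (R 0 2 - R 2 0) * sin θ + R 1 1 := by
  simp [trace, yrot, mul_apply, Fin.sum_univ_three]
  ring

theorem mul_cos_arctan2_add_mul_sin_arctan2 (a b : ℝ) :
    a * cos (arctan2 b a) + b * sin (arctan2 b a) = √(a ^ 2 + b ^ 2) := by
  set z : ℂ := ⟨a, b⟩
  have hz : ‖z‖ = √(a ^ 2 + b ^ 2) := by
    rw [Complex.norm_def, Complex.normSq_apply, sq, sq]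
  rcases eq_or_ne z 0 with h | h
  · obtain ⟨rfl, rfl⟩ : a = 0 ∧ b = 0 := Complex.ext_iff.mp h
    simp
  · rw [arctan2, Complex.cos_arg h, Complex.sin_arg, hz]
    have : 0 < √(a ^ 2 + b ^ 2) := hz ▸ norm_pos_iff.mpr h
    field_simp
    rw [sq_sqrt (by positivity)]
    ring

theorem mul_cos_add_mul_sin_le_sqrt (a b θ : ℝ) :
    a * cos θ + b * sin θ ≤ √(a ^ 2 + b ^ 2) :=
  (le_abs_self _).trans <| Real.abs_le_sqrt <| by
    nlinarith [sq_nonneg (a * sin θ - b * cos θ), sin_sq_add_cos_sq θ]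

theorem yrot_minimizer_general (R : Matrix (Fin 3) (Fin 3) ℝ)
    (hR : Rᵀ * R = 1 ∧ R.det = 1) :
    ∀ θ ∈ Set.Ico (0 : ℝ) (2 * π),
      frobNorm (R * yrot (arctan2 (R 0 2 - R 2 0) (R 0 0 + R 2 2)) - 1) ≤
        frobNorm (R * yrot θ - 1) := by
  intro θ _
  have horth (φ : ℝ) : (R * yrot φ)ᵀ * (R * yrot φ) = 1 := by
    rw [transpose_mul, Matrix.mul_assoc, ← Matrix.mul_assoc Rᵀ, hR.1, Matrix.one_mul,
      transpose_yrot_mul_yrot]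
  unfold frobNorm
  apply sqrt_le_sqrt
  rw [sum_sq_sub_one_of_transpose_mul_self (horth _),
    sum_sq_sub_one_of_transpose_mul_self (horth _), trace_mul_yrot, trace_mul_yrot,
    mul_cos_arctan2_add_mul_sin_arctan2]
  linarith [mul_cos_add_mul_sin_le_sqrt (R 0 0 + R 2 2) (R 0 2 - R 2 0) θ]

theorem yrot_minimizer (R : Matrix (Fin 3) (Fin 3) ℝ)
    (hR : Rᵀ * R = 1 ∧ R.det = 1)
    (hab : ¬(R 0 2 - R 2 0 = 0 ∧ R 0 0 + R 2 2 = 0)) :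
    ∀ θ ∈ Set.Ico (0 : ℝ) (2 * π),
      frobNorm (R * yrot (arctan2 (R 0 2 - R 2 0) (R 0 0 + R 2 2)) - 1) ≤
        frobNorm (R * yrot θ - 1) :=
  yrot_minimizer_general R hR
end

section
/- For any R ∈ SO(3), the quantity √((R₁₁ + R₃₃)² + (R₁₃ − R₃₁)²) is at most 2, with equality if and only if R is a rotation about the y-axis. -/
open Matrix

open Real

/-!
For `R ∈ SO(3)` the adjugate is `Rᵀ`, so `R 1 1 = R 0 0 * R 2 2 - R 0 2 * R 2 0`. Together with the
unit length of columns `0` and `2` this gives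
`(R 0 0 + R 2 2) ^ 2 + (R 0 2 - R 2 0) ^ 2 = 2 + 2 * R 1 1 - R 1 0 ^ 2 - R 1 2 ^ 2 ≤ 4`,
as `R 1 1 ≤ 1`. Equality forces `R 1 1 = 1`, so the middle row and column are the second basis
vector, and the remaining `2 × 2` block has unit columns and determinant `1`: a plane rotation.
-/

namespace Matrix

variable {n α : Type*} [Fintype n] [DecidableEq n] [CommRing α] {R : Matrix n n α}

theorem adjugate_eq_transpose_of_transpose_mul_self_eq_one (hR : Rᵀ * R = 1)
    (hdet : R.det = 1) : adjugate R = Rᵀ :=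
  calc adjugate R = Rᵀ * R * adjugate R := by rw [hR, Matrix.one_mul]
    _ = Rᵀ := by rw [Matrix.mul_assoc, mul_adjugate, hdet, one_smul, Matrix.mul_one]

theorem sum_sq_apply_eq_one_of_transpose_mul_self_eq_one (hR : Rᵀ * R = 1) (j : n) :
    ∑ k, R k j ^ 2 = 1 := by
  simpa [mul_apply, sq] using congrFun (congrFun hR j) j

end Matrix

theorem Real.exists_cos_sin_eq_of_sq_add_sq_eq_one {a b : ℝ} (h : a ^ 2 + b ^ 2 = 1) :
    ∃ θ : ℝ, cos θ = a ∧ sin θ = b := by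
  have hz : ‖(⟨a, b⟩ : ℂ)‖ = 1 := by simp [Complex.norm_eq_sqrt_sq_add_sq, h]
  refine ⟨Complex.arg ⟨a, b⟩, ?_, ?_⟩
  · simpa [hz] using Complex.norm_mul_cos_arg ⟨a, b⟩
  · simpa [hz] using Complex.norm_mul_sin_arg ⟨a, b⟩

theorem yrot_apply_sq_add_sq (θ : ℝ) :
    (yrot θ 0 0 + yrot θ 2 2) ^ 2 + (yrot θ 0 2 - yrot θ 2 0) ^ 2 = 4 := by
  simp only [yrot, Fin.isValue, of_apply, cons_val', cons_val_zero, cons_val_fin_one, cons_val,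
    cons_val_one]
  linear_combination 4 * cos_sq_add_sin_sq θ

namespace SO3

variable {R : Matrix (Fin 3) (Fin 3) ℝ} (hR : Rᵀ * R = 1) (hdet : R.det = 1)
include hR

theorem sq_add_sq_add_sq_col_eq_one (j : Fin 3) : R 0 j ^ 2 + R 1 j ^ 2 + R 2 j ^ 2 = 1 := by
  simpa [Fin.sum_univ_three] using sum_sq_apply_eq_one_of_transpose_mul_self_eq_one hR j

theorem apply_one_one_le_one : R 1 1 ≤ 1 := by
  nlinarith [sq_add_sq_add_sq_col_eq_one hR 1, sq_nonneg (R 0 1), sq_nonneg (R 2 1)]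

include hdet

theorem apply_one_one_eq : R 1 1 = R 0 0 * R 2 2 - R 0 2 * R 2 0 := by
  have := congrFun (congrFun (adjugate_eq_transpose_of_transpose_mul_self_eq_one hR hdet) 1) 1
  simpa [adjugate_fin_three] using this.symm

theorem sq_add_sq_eq :
    (R 0 0 + R 2 2) ^ 2 + (R 0 2 - R 2 0) ^ 2 = 2 + 2 * R 1 1 - R 1 0 ^ 2 - R 1 2 ^ 2 := by
  linear_combination sq_add_sq_add_sq_col_eq_one hR 0 + sq_add_sq_add_sq_col_eq_one hR 2 -
    2 * apply_one_one_eq hR hdet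

theorem sq_add_sq_le_four : (R 0 0 + R 2 2) ^ 2 + (R 0 2 - R 2 0) ^ 2 ≤ 4 := by
  linarith [sq_add_sq_eq hR hdet, apply_one_one_le_one hR, sq_nonneg (R 1 0), sq_nonneg (R 1 2)]

theorem exists_eq_yrot_of_sq_add_sq_eq_four
    (h : (R 0 0 + R 2 2) ^ 2 + (R 0 2 - R 2 0) ^ 2 = 4) : ∃ θ : ℝ, R = yrot θ := by
  have hcol₀ := sq_add_sq_add_sq_col_eq_one hR 0
  have hcol₂ := sq_add_sq_add_sq_col_eq_one hR 2
  have h₁₁ : R 1 1 = 1 := by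
    linarith [sq_add_sq_eq hR hdet, apply_one_one_le_one hR, sq_nonneg (R 1 0), sq_nonneg (R 1 2)]
  obtain ⟨h₁₀, h₁₂⟩ : R 1 0 = 0 ∧ R 1 2 = 0 := mul_self_add_mul_self_eq_zero.mp <| by
    linear_combination sq_add_sq_eq hR hdet - h + 2 * h₁₁
  obtain ⟨h₀₁, h₂₁⟩ : R 0 1 = 0 ∧ R 2 1 = 0 := mul_self_add_mul_self_eq_zero.mp <| by
    linear_combination sq_add_sq_add_sq_col_eq_one hR 1 - (R 1 1 + 1) * h₁₁
  obtain ⟨h₂₂, h₀₂⟩ : R 2 2 - R 0 0 = 0 ∧ R 0 2 + R 2 0 = 0 :=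
    mul_self_add_mul_self_eq_zero.mp <| by
      linear_combination hcol₀ + hcol₂ - R 1 0 * h₁₀ - R 1 2 * h₁₂ +
        2 * apply_one_one_eq hR hdet - 2 * h₁₁
  obtain ⟨θ, hcos, hsin⟩ := exists_cos_sin_eq_of_sq_add_sq_eq_one (a := R 0 0) (b := R 2 0)
    (by linear_combination hcol₀ - R 1 0 * h₁₀)
  refine ⟨θ, ?_⟩
  ext i j
  fin_cases i <;> fin_cases j <;>
    simp [yrot, hcos, hsin, h₁₁, h₁₀, h₁₂, h₀₁, h₂₁, sub_eq_zero.mp h₂₂,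
      eq_neg_of_add_eq_zero_left h₀₂]

end SO3

theorem sqrt_bound_and_yrot_characterization (R : Matrix (Fin 3) (Fin 3) ℝ)
    (hR : Rᵀ * R = 1 ∧ R.det = 1) :
    Real.sqrt ((R 0 0 + R 2 2) ^ 2 + (R 0 2 - R 2 0) ^ 2) ≤ 2 ∧
    (Real.sqrt ((R 0 0 + R 2 2) ^ 2 + (R 0 2 - R 2 0) ^ 2) = 2 ↔
      ∃ θ : ℝ, R = yrot θ) := by
  obtain ⟨hRR, hdet⟩ := hR
  have hle := SO3.sq_add_sq_le_four hRR hdet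
  refine ⟨sqrt_le_iff.mpr ⟨zero_le_two, by linarith⟩, ?_⟩
  rw [sqrt_eq_iff_eq_sq (by positivity) zero_le_two]
  constructor
  · intro h
    exact SO3.exists_eq_yrot_of_sq_add_sq_eq_four hRR hdet (by linarith)
  · rintro ⟨θ, rfl⟩
    linarith [yrot_apply_sq_add_sq θ]
end
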